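/- Let K be an algebraically closed field of characteristic zero, and let 1 ≤ a ≤ b be integers. If N ⊆ Matrix_{b×a}(K) is a 1-generic linear subspace, then dim_K N ≥ a + b − 1. -/

import Mathlib

/-!
The matrices of rank at most one form the affine cone over the Segre variety, with coordinate
ring `S = K[zᵢⱼ] / ker (zᵢⱼ ↦ xᵢ yⱼ)`. Killing the variables `x, y` one at a time yields a
strictly increasing chain of `a + b - 1` primes of `S` inside the irrelevant ideal `𝔪`, so
`a + b - 1 ≤ height 𝔪`. By the Nullstellensatz, `1`-genericity of `N` says that the trace forms
`z ↦ tr (φ z)` of a basis of `N` cut out only the origin of the cone, i.e. that `𝔪` is minimal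
over the ideal they generate. Krull's height theorem then gives `height 𝔪 ≤ dim N`.
-/

open MvPolynomial

lemma Matrix.rank_le_one_of_mul_eq_mul {m n K : Type*} [Fintype n] [Field K] {ψ : Matrix m n K}
    (h : ∀ i k j l, ψ i j * ψ k l = ψ i l * ψ k j) : ψ.rank ≤ 1 := by
  by_cases hψ : ∃ i j, ψ i j ≠ 0
  · obtain ⟨i₀, j₀, hne⟩ := hψ
    have : ψ = Matrix.vecMulVec (fun i => ψ i j₀ / ψ i₀ j₀) (fun j => ψ i₀ j) := by
      ext i j
      rw [Matrix.vecMulVec_apply, div_mul_eq_mul_div, h i i₀ j₀ j,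
        mul_div_cancel_right₀ _ hne]
    rw [this]
    exact Matrix.rank_vecMulVec_le _ _
  · simp only [ne_eq, not_exists, not_not] at hψ
    simp [show ψ = 0 from Matrix.ext hψ]

lemma Module.Basis.trace_mul_eq_zero {m n R ι : Type*} [Fintype m] [Fintype n] [Fintype ι]
    [CommRing R] {N : Submodule R (Matrix m n R)} (B : Basis ι R N) {ψ : Matrix n m R}
    (h : ∀ k, ((B k : Matrix m n R) * ψ).trace = 0) {φ : Matrix m n R} (hφ : φ ∈ N) :
    (φ * ψ).trace = 0 := by
  have hsum := congrArg Subtype.val (B.sum_repr ⟨φ, hφ⟩)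
  push_cast at hsum
  rw [← hsum, Matrix.sum_mul, Matrix.trace_sum]
  exact Finset.sum_eq_zero fun k _ => by rw [Matrix.smul_mul, Matrix.trace_smul, h, smul_zero]

namespace Segre

variable (K : Type*) [Field K] (α β : Type*)

noncomputable def segreMap : MvPolynomial (α × β) K →ₐ[K] MvPolynomial (α ⊕ β) K :=
  aeval fun p => X (.inl p.1) * X (.inr p.2)

abbrev SegreRing := MvPolynomial (α × β) K ⧸ RingHom.ker (segreMap K α β)

variable {K α β}

@[simp]
lemma segreMap_X (p : α × β) :
    segreMap K α β (X p) = X (.inl p.1) * X (.inr p.2) :=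
  aeval_X _ _

lemma X_mul_X_sub_X_mul_X_mem_ker_segreMap (i k : α) (j l : β) :
    X (i, j) * X (k, l) - X (i, l) * X (k, j) ∈ RingHom.ker (segreMap K α β) := by
  simp only [RingHom.mem_ker, map_sub, map_mul, segreMap_X]
  ring

section killVars

variable {σ : Type*} {V W : Set σ} {v : σ}

noncomputable def killVars (V : Set σ) : MvPolynomial σ K →ₐ[K] MvPolynomial σ K :=
  open scoped Classical in aeval fun v => if v ∈ V then 0 else X v

lemma killVars_X_of_mem (hv : v ∈ V) : killVars (K := K) V (X v) = 0 := by
  simp [killVars, hv]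

lemma killVars_X_of_notMem (hv : v ∉ V) : killVars (K := K) V (X v) = X v := by
  simp [killVars, hv]

lemma killVars_comp_killVars (h : V ⊆ W) :
    (killVars (K := K) W).comp (killVars V) = killVars W := by
  refine algHom_ext fun v => ?_
  by_cases hv : v ∈ V
  · simp [killVars_X_of_mem hv, killVars_X_of_mem (h hv)]
  · simp [killVars_X_of_notMem hv]

end killVars

variable (K) in
noncomputable def segrePrime (V : Set (α ⊕ β)) : Ideal (SegreRing K α β) :=
  RingHom.ker ((killVars V).comp (Ideal.kerLiftAlg (segreMap K α β)))

instance (V : Set (α ⊕ β)) : (segrePrime K V).IsPrime := RingHom.ker_isPrime _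

lemma segrePrime_mono {V W : Set (α ⊕ β)} (h : V ⊆ W) :
    segrePrime K V ≤ segrePrime K W := by
  intro s hs
  simp only [segrePrime, RingHom.mem_ker, AlgHom.coe_comp, Function.comp_apply] at hs ⊢
  rw [← killVars_comp_killVars h, AlgHom.comp_apply, hs, map_zero]

lemma mk_X_mem_segrePrime_iff {V : Set (α ⊕ β)} (p : α × β) :
    Ideal.Quotient.mk _ (X p) ∈ segrePrime K V ↔ .inl p.1 ∈ V ∨ .inr p.2 ∈ V := by
  simp only [segrePrime, RingHom.mem_ker, AlgHom.coe_comp, Function.comp_apply,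
    Ideal.kerLiftAlg_mk, segreMap_X, map_mul]
  by_cases h₁ : .inl p.1 ∈ V <;> by_cases h₂ : .inr p.2 ∈ V <;>
    simp [h₁, h₂, killVars_X_of_mem, killVars_X_of_notMem, X_ne_zero]

lemma segrePrime_lt {V W : Set (α ⊕ β)} (hVW : V ⊆ W) {p : α × β}
    (h₁ : .inl p.1 ∉ V) (h₂ : .inr p.2 ∉ V) (hW : .inl p.1 ∈ W ∨ .inr p.2 ∈ W) :
    segrePrime K V < segrePrime K W :=
  lt_of_le_of_ne (segrePrime_mono hVW) fun h => by
    have := (mk_X_mem_segrePrime_iff (K := K) (V := W) p).2 hW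
    rw [← h, mk_X_mem_segrePrime_iff] at this
    tauto

lemma height_segrePrime_add_one_le {V : Set (α ⊕ β)} {p : α × β}
    (h₁ : .inl p.1 ∉ V) (h₂ : .inr p.2 ∉ V) {v : α ⊕ β}
    (hv : v = .inl p.1 ∨ v = .inr p.2) :
    (segrePrime K V).height + 1 ≤ (segrePrime K (insert v V)).height :=
  Ideal.height_add_one_le_of_lt_of_isPrime <|
    segrePrime_lt (Set.subset_insert v V) h₁ h₂ (by rcases hv with rfl | rfl <;> simp)

/- Kill the `y`'s first, while no `x` is killed, then the `x`'s, while `y_{j₀}` survives: every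
step is then strict, witnessed by some `xᵢ yⱼ`. -/
lemma card_add_card_le_height_segrePrime [Nonempty α] {j₀ : β} {T : Finset β}
    (hj₀ : j₀ ∉ T) (S : Finset α) :
    (S.card + T.card : ℕ∞) ≤
      (segrePrime K (.inl '' (S : Set α) ∪ .inr '' (T : Set β))).height := by
  classical
  have hT : ∀ T : Finset β,
      (T.card : ℕ∞) ≤ (segrePrime K (α := α) (.inr '' (T : Set β))).height := by
    intro T
    induction T using Finset.induction_on with
    | empty => simp
    | insert j T hj ih =>
      obtain ⟨i⟩ := ‹Nonempty α›
      rw [Finset.card_insert_of_notMem hj, Finset.coe_insert, Set.image_insert_eq]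
      refine le_trans ?_
        (height_segrePrime_add_one_le (p := (i, j)) (by simp) (by simpa) (.inr rfl))
      push_cast
      gcongr
  induction S using Finset.induction_on with
  | empty => simpa using hT T
  | insert i S hi ih =>
    rw [Finset.card_insert_of_notMem hi, Finset.coe_insert, Set.image_insert_eq,
      Set.insert_union]
    refine le_trans ?_
      (height_segrePrime_add_one_le (p := (i, j₀)) (by simpa) (by simpa) (.inl rfl))
    push_cast
    rw [add_right_comm]
    gcongr

lemma aeval_zero_eq_zero_of_mk_mem_segrePrime_univ {p : MvPolynomial (α × β) K}
    (hp : Ideal.Quotient.mk _ p ∈ segrePrime K (Set.univ : Set (α ⊕ β))) :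
    aeval (0 : α × β → K) p = 0 := by
  have h : (aeval (0 : α ⊕ β → K)).comp ((killVars Set.univ).comp (segreMap K α β)) =
      aeval 0 :=
    algHom_ext fun q => by simp [killVars_X_of_mem]
  simp only [segrePrime, RingHom.mem_ker, AlgHom.coe_comp, Function.comp_apply,
    Ideal.kerLiftAlg_mk] at hp
  rw [← h, AlgHom.comp_apply, AlgHom.comp_apply, hp, map_zero]

variable [Fintype α] [Fintype β] {ι : Type*}

noncomputable def traceForm (φ : Matrix β α K) : MvPolynomial (α × β) K :=
  ∑ p : α × β, C (φ p.2 p.1) * X p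

lemma aeval_traceForm (φ : Matrix β α K) (z : α × β → K) :
    aeval z (traceForm φ) = (φ * Matrix.of (Function.curry z)).trace := by
  simp [traceForm, Matrix.trace, Matrix.mul_apply, Fintype.sum_prod_type,
    Finset.sum_comm (γ := α)]

noncomputable def traceIdeal (φ : ι → Matrix β α K) : Ideal (SegreRing K α β) :=
  Ideal.span (Set.range fun k => Ideal.Quotient.mk _ (traceForm (φ k)))

def IsOneGeneric (φ : ι → Matrix β α K) : Prop :=
  ∀ ψ : Matrix α β K, ψ.rank ≤ 1 → (∀ k, (φ k * ψ).trace = 0) → ψ = 0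

variable {φ : ι → Matrix β α K}

lemma IsOneGeneric.eq_zero_of_mem_zeroLocus (hφ : IsOneGeneric φ) {z : α × β → K}
    (hz : z ∈ zeroLocus K ((traceIdeal φ).comap (Ideal.Quotient.mk _))) : z = 0 := by
  have hψ := hφ (Matrix.of (Function.curry z)) ?rank ?trace
  · funext p
    exact congrFun₂ hψ p.1 p.2
  · refine Matrix.rank_le_one_of_mul_eq_mul fun i k j l => ?_
    have := hz _ <| Ideal.mem_comap.2 <| by
      rw [Ideal.Quotient.eq_zero_iff_mem.2 (X_mul_X_sub_X_mul_X_mem_ker_segreMap i k j l)]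
      exact zero_mem _
    simpa [sub_eq_zero] using this
  · intro k
    rw [← aeval_traceForm]
    exact hz _ (Ideal.subset_span ⟨k, rfl⟩)

variable [IsAlgClosed K]

lemma IsOneGeneric.mk_mem_radical_traceIdeal (hφ : IsOneGeneric φ) {p : MvPolynomial (α × β) K}
    (hp : aeval (0 : α × β → K) p = 0) :
    Ideal.Quotient.mk _ p ∈ (traceIdeal φ).radical := by
  rw [← Ideal.mem_comap, Ideal.comap_radical, ← vanishingIdeal_zeroLocus_eq_radical (K := K)]
  intro z hz
  rwa [hφ.eq_zero_of_mem_zeroLocus hz]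

lemma IsOneGeneric.segrePrime_univ_mem_minimalPrimes (hφ : IsOneGeneric φ) :
    segrePrime K Set.univ ∈ (traceIdeal φ).minimalPrimes := by
  refine ⟨⟨inferInstance, ?_⟩, fun Q ⟨hQ, hle⟩ _ s hs => ?_⟩
  · rw [traceIdeal, Ideal.span_le]
    rintro _ ⟨k, rfl⟩
    simp [segrePrime, traceForm, killVars_X_of_mem]
  · obtain ⟨p, rfl⟩ := Ideal.Quotient.mk_surjective s
    exact hQ.radical_le_iff.2 hle <|
      hφ.mk_mem_radical_traceIdeal (aeval_zero_eq_zero_of_mk_mem_segrePrime_univ hs)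

theorem IsOneGeneric.card_add_card_le [Nonempty α] [Nonempty β] [Fintype ι]
    (hφ : IsOneGeneric φ) : Fintype.card α + Fintype.card β ≤ Fintype.card ι + 1 := by
  classical
  obtain ⟨j₀⟩ := ‹Nonempty β›
  have hkrull := Ideal.height_le_card_of_mem_minimalPrimes_span_finset
    (s := Finset.univ.image fun k => Ideal.Quotient.mk _ (traceForm (φ k)))
    (by simpa [traceIdeal] using hφ.segrePrime_univ_mem_minimalPrimes)
  suffices ((Fintype.card α + Fintype.card β : ℕ) : ℕ∞) ≤ Fintype.card ι + 1 by
    exact_mod_cast this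
  calc ((Fintype.card α + Fintype.card β : ℕ) : ℕ∞)
      = (Finset.univ : Finset α).card + (Finset.univ.erase j₀).card + 1 := by
        rw [Finset.card_erase_of_mem (Finset.mem_univ _), Finset.card_univ, Finset.card_univ]
        have := Fintype.card_pos (α := β)
        norm_cast
        omega
    _ ≤ (segrePrime K (.inl '' ((Finset.univ : Finset α) : Set α) ∪
          .inr '' ((Finset.univ.erase j₀ : Finset β) : Set β))).height + 1 := by
        gcongr
        exact card_add_card_le_height_segrePrime (Finset.notMem_erase j₀ _) _
    _ ≤ (segrePrime K Set.univ).height + 1 := by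
        gcongr
        exact segrePrime_mono (Set.subset_univ _)
    _ ≤ Fintype.card ι + 1 := by
        gcongr
        exact hkrull.trans (by exact_mod_cast Finset.card_image_le)

end Segre

theorem statement2_general {K : Type*} [Field K] [IsAlgClosed K]
    (a b : ℕ) (ha : 1 ≤ a) (hab : a ≤ b)
    (N : Submodule K (Matrix (Fin b) (Fin a) K))
    (hgen : ∀ ψ : Matrix (Fin a) (Fin b) K, ψ.rank ≤ 1 →
      (∀ φ ∈ N, Matrix.trace (φ * ψ) = 0) → ψ = 0) :
    a + b - 1 ≤ Module.finrank K N := by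
  have : Nonempty (Fin a) := Fin.pos_iff_nonempty.mp ha
  have : Nonempty (Fin b) := Fin.pos_iff_nonempty.mp (ha.trans hab)
  let B := Module.finBasis K N
  have hB : Segre.IsOneGeneric fun k => (B k : Matrix (Fin b) (Fin a) K) :=
    fun ψ hψ h => hgen ψ hψ fun _ => B.trace_mul_eq_zero h
  have := hB.card_add_card_le
  simp only [Fintype.card_fin] at this
  omega

/-- A `1`-generic linear subspace `N` of `b×a` matrices (with `1 ≤ a ≤ b`)
over an algebraically closed field of characteristic zero has dimension at least
`a + b - 1`. Here `N` is `k`-generic means: the only `ψ ∈ Matrix_{a×b}(K)` with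
`rank ψ ≤ k` and `tr(φψ) = 0` for all `φ ∈ N` is `ψ = 0`. -/
theorem statement2 {K : Type*} [Field K] [IsAlgClosed K] [CharZero K]
    (a b : ℕ) (ha : 1 ≤ a) (hab : a ≤ b)
    (N : Submodule K (Matrix (Fin b) (Fin a) K))
    (hgen : ∀ ψ : Matrix (Fin a) (Fin b) K, ψ.rank ≤ 1 →
      (∀ φ ∈ N, Matrix.trace (φ * ψ) = 0) → ψ = 0) :
    a + b - 1 ≤ Module.finrank K N :=
  statement2_general a b ha hab N hgen
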